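/- arXiv:2104.04904 — 3 statements merged into one kernel-verified Lean document; each statement's English description precedes it below -/
import Mathlib

section
/- Soundness of the SaSTL quantitative semantics: for every SaSTL formula φ, every spatial-temporal signal ω, every sample time t in 𝕋 and every location l in L, if ρ(φ,ω,t,l) > 0 then (ω,t,l) ⊨ φ, and if ρ(φ,ω,t,l) < 0 then (ω,t,l) ⊭ φ. -/
/-!
The robustness `ρ` and the satisfaction relation are linked by sign-soundness: `0 < ρ` forces
satisfaction and `ρ < 0` forbids it. This relation is preserved by negation, `min`/`∧`,
`sup'`/`∃` and `inf'`/`∀`, which covers every operator except the counting ones with `sum` and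
`avg`. For those, if the `k`-th largest robustness among the neighbours is positive then at least
`k` neighbours have positive robustness, hence satisfy the subformula; if it is negative then
fewer than `k` have nonnegative robustness, hence fewer than `k` satisfy it. With
`k = ⌊c⌋ + 1` (for `avg`, `c` scaled by the number of neighbours), "at least `k`" is exactly
"more than `c`".
-/

open scoped Classical

noncomputable section

/-- Aggregation operations of SaSTL. -/
inductive AggOp : Type
  | max | min | sum | avg

/-- SaSTL formulas over a set of signal variables `Var` and a set of
spatial-domain indices `Dom`.  `untl I φ ψ` is the bounded until `φ U_I ψ`,
`agg op D x c` is the spatial aggregation atom `A_D^op x > c`, and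
`cnt op D φ c` is the spatial counting formula `C_D^op φ > c`. -/
inductive SaSTL (Var Dom : Type) : Type
  | atom : Var → ℝ → SaSTL Var Dom
  | not  : SaSTL Var Dom → SaSTL Var Dom
  | and  : SaSTL Var Dom → SaSTL Var Dom → SaSTL Var Dom
  | untl : Set ℝ → SaSTL Var Dom → SaSTL Var Dom → SaSTL Var Dom
  | agg  : AggOp → Dom → Var → ℝ → SaSTL Var Dom
  | cnt  : AggOp → Dom → SaSTL Var Dom → ℝ → SaSTL Var Dom

/-- A monitoring frame: a finite nonempty set `T` of real sample times, and,
for every spatial-domain index `D` and location `l`, a finite nonempty set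
`nbr D l` of neighbouring locations (the set `L_D^l`). -/
structure Frame (Dom Loc : Type) where
  T : Finset ℝ
  T_ne : T.Nonempty
  nbr : Dom → Loc → Finset Loc
  nbr_ne : ∀ D l, (nbr D l).Nonempty

/-- The `k`-th largest element of a finite multiset of reals: the element at
position `k` when the entries are listed in non-increasing order. -/
def kthLargest (m : Multiset ℝ) (k : ℕ) : ℝ :=
  (Multiset.sort m (· ≤ ·)).getD (Multiset.card m - k) 0

variable {Var Dom Loc : Type}

/-- Boolean satisfaction `(ω, t, l) ⊨ φ`. -/
def sat (F : Frame Dom Loc) (ω : Var → ℝ → Loc → ℝ) :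
    SaSTL Var Dom → ℝ → Loc → Prop
  | .atom x c, t, l => c < ω x t l
  | .not φ, t, l => ¬ sat F ω φ t l
  | .and φ ψ, t, l => sat F ω φ t l ∧ sat F ω ψ t l
  | .untl I φ ψ, t, l =>
      ∃ t' ∈ F.T, t' - t ∈ I ∧ sat F ω ψ t' l ∧
        ∀ t'' ∈ F.T, t < t'' → t'' < t' → sat F ω φ t'' l
  | .agg op D x c, t, l =>
      (match op with
        | .max => (F.nbr D l).sup' (F.nbr_ne D l) (fun l' => ω x t l')
        | .min => (F.nbr D l).inf' (F.nbr_ne D l) (fun l' => ω x t l')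
        | .sum => ∑ l' ∈ F.nbr D l, ω x t l'
        | .avg => (∑ l' ∈ F.nbr D l, ω x t l') / (F.nbr D l).card) > c
  | .cnt op D φ c, t, l =>
      (match op with
        | .max => (F.nbr D l).sup' (F.nbr_ne D l)
            (fun l' => if sat F ω φ t l' then (1 : ℝ) else 0)
        | .min => (F.nbr D l).inf' (F.nbr_ne D l)
            (fun l' => if sat F ω φ t l' then (1 : ℝ) else 0)
        | .sum => ∑ l' ∈ F.nbr D l, (if sat F ω φ t l' then (1 : ℝ) else 0)
        | .avg => (∑ l' ∈ F.nbr D l, (if sat F ω φ t l' then (1 : ℝ) else 0)) /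
            (F.nbr D l).card) > c

/-- Quantitative semantics (robustness) `ρ(φ, ω, t, l)`. -/
def rho (F : Frame Dom Loc) (ω : Var → ℝ → Loc → ℝ) :
    SaSTL Var Dom → ℝ → Loc → ℝ
  | .atom x c, t, l => ω x t l - c
  | .not φ, t, l => - rho F ω φ t l
  | .and φ ψ, t, l => min (rho F ω φ t l) (rho F ω ψ t l)
  | .untl I φ ψ, t, l =>
      if h : (F.T.filter (fun s => s - t ∈ I)).Nonempty then
        (F.T.filter (fun s => s - t ∈ I)).sup' h (fun t' =>
          if h' : (F.T.filter (fun s => t < s ∧ s < t')).Nonempty then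
            min (rho F ω ψ t' l)
              ((F.T.filter (fun s => t < s ∧ s < t')).inf' h'
                (fun t'' => rho F ω φ t'' l))
          else rho F ω ψ t' l)
      else 0
  | .agg op D x c, t, l =>
      match op with
      | .max => (F.nbr D l).sup' (F.nbr_ne D l) (fun l' => ω x t l') - c
      | .min => (F.nbr D l).inf' (F.nbr_ne D l) (fun l' => ω x t l') - c
      | .sum => ((∑ l' ∈ F.nbr D l, ω x t l') - c) / (F.nbr D l).card
      | .avg => (∑ l' ∈ F.nbr D l, ω x t l') / (F.nbr D l).card - c
  | .cnt op D φ c, t, l =>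
      match op with
      | .max => (F.nbr D l).sup' (F.nbr_ne D l) (fun l' => rho F ω φ t l')
      | .min => (F.nbr D l).inf' (F.nbr_ne D l) (fun l' => rho F ω φ t l')
      | .sum => kthLargest ((F.nbr D l).val.map (fun l' => rho F ω φ t l'))
          (⌊c⌋ + 1).toNat
      | .avg => kthLargest ((F.nbr D l).val.map (fun l' => rho F ω φ t l'))
          (⌊c * (F.nbr D l).card⌋ + 1).toNat

/-- Well-formedness assumptions on formulas: every until-interval is a bounded
interval of positive reals whose shifted intersection with the sample times is
nonempty, and the constants in counting subformulas satisfy `0 ≤ c < 1` for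
`op ∈ {max, min, avg}` and `0 ≤ c < |L_D^l|` for `op = sum`. -/
def WellFormed (F : Frame Dom Loc) : SaSTL Var Dom → Prop
  | .atom _ _ => True
  | .not φ => WellFormed F φ
  | .and φ ψ => WellFormed F φ ∧ WellFormed F ψ
  | .untl I φ ψ =>
      (I ⊆ Set.Ioi 0 ∧ BddAbove I ∧ I.OrdConnected) ∧
      (∀ t ∈ F.T, (F.T.filter (fun s => s - t ∈ I)).Nonempty) ∧
      WellFormed F φ ∧ WellFormed F ψ
  | .agg _ _ _ _ => True
  | .cnt op D φ c =>
      WellFormed F φ ∧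
      (match op with
        | .sum => 0 ≤ c ∧ ∀ l : Loc, c < (F.nbr D l).card
        | _ => 0 ≤ c ∧ c < 1)


namespace List.SortedLE

variable {α : Type*} [LinearOrder α] {L : List α} {j : ℕ}

theorem getElem_le_of_mem_drop (hL : L.SortedLE) (hj : j < L.length) {y : α}
    (hy : y ∈ L.drop j) : L[j] ≤ y := by
  obtain ⟨i, hi, rfl⟩ := List.mem_drop_iff_getElem.1 hy
  exact hL.getElem_le_getElem_of_le (Nat.le_add_right j i)

theorem le_getElem_of_mem_take (hL : L.SortedLE) (hj : j < L.length) {y : α}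
    (hy : y ∈ L.take (j + 1)) : y ≤ L[j] := by
  obtain ⟨i, hi, rfl⟩ := List.mem_take_iff_getElem.1 hy
  exact hL.getElem_le_getElem_of_le (by omega)

theorem length_sub_le_countP_lt (hL : L.SortedLE) (hj : j < L.length) {a : α}
    (ha : a < L[j]) : L.length - j ≤ L.countP (fun y => a < y) :=
  calc L.length - j = (L.drop j).length := (List.length_drop ..).symm
    _ = (L.drop j).countP (fun y => a < y) := by
      refine (List.countP_eq_length.2 fun y hy => ?_).symm
      simpa using ha.trans_le (hL.getElem_le_of_mem_drop hj hy)
    _ ≤ L.countP (fun y => a < y) := (List.drop_sublist j L).countP_le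

theorem countP_le_lt_length_sub (hL : L.SortedLE) (hj : j < L.length) {a : α}
    (ha : L[j] < a) : L.countP (fun y => a ≤ y) < L.length - j := by
  have htake : (L.take (j + 1)).countP (fun y => a ≤ y) = 0 := by
    refine List.countP_eq_zero.2 fun y hy => ?_
    simpa using (hL.le_getElem_of_mem_take hj hy).trans_lt ha
  have hdrop := (L.drop (j + 1)).countP_le_length (p := fun y => a ≤ y)
  rw [← L.take_append_drop (j + 1), List.countP_append, htake]
  simp only [List.length_drop] at hdrop
  simp only [List.length_append, List.length_take, List.length_drop]
  omega

end List.SortedLE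

section KthLargest

variable {m : Multiset ℝ} {k : ℕ}

theorem kthLargest_eq_getElem (hk1 : 1 ≤ k) (hk : k ≤ Multiset.card m) :
    kthLargest m k = (m.sort (· ≤ ·))[Multiset.card m - k]'(by simp; omega) :=
  List.getD_eq_getElem ..

theorem le_countP_of_lt_kthLargest (hk1 : 1 ≤ k) (hk : k ≤ Multiset.card m) {a : ℝ}
    (ha : a < kthLargest m k) : k ≤ m.countP (a < ·) := by
  rw [kthLargest_eq_getElem hk1 hk] at ha
  have hL := (m.pairwise_sort (· ≤ ·)).sortedLE.length_sub_le_countP_lt (by simp; omega) ha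
  rw [← m.sort_eq (· ≤ ·), Multiset.coe_countP]
  simp only [Multiset.length_sort] at hL
  omega

theorem countP_lt_of_kthLargest_lt (hk1 : 1 ≤ k) (hk : k ≤ Multiset.card m) {a : ℝ}
    (ha : kthLargest m k < a) : m.countP (a ≤ ·) < k := by
  rw [kthLargest_eq_getElem hk1 hk] at ha
  have hL := (m.pairwise_sort (· ≤ ·)).sortedLE.countP_le_lt_length_sub (by simp; omega) ha
  rw [← m.sort_eq (· ≤ ·), Multiset.coe_countP]
  simp only [Multiset.length_sort] at hL
  omega

end KthLargest

theorem Int.toNat_floor_add_one {c : ℝ} (hc : 0 ≤ c) : (⌊c⌋ + 1).toNat = ⌊c⌋₊ + 1 := by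
  rw [Int.toNat_add (Int.floor_nonneg.2 hc) zero_le_one, Int.floor_toNat, Int.toNat_one]

def SignSound (r : ℝ) (p : Prop) : Prop :=
  (0 < r → p) ∧ (r < 0 → ¬ p)

namespace SignSound

variable {r s : ℝ} {p q : Prop}

theorem zero : SignSound 0 p :=
  ⟨fun h => (lt_irrefl 0 h).elim, fun h => (lt_irrefl 0 h).elim⟩

theorem sub (a c : ℝ) : SignSound (a - c) (c < a) :=
  ⟨sub_pos.1, fun h => not_lt.2 (sub_nonpos.1 h.le)⟩

theorem of_iff (h : SignSound r p) (hpq : p ↔ q) : SignSound r q :=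
  propext hpq ▸ h

theorem div (h : SignSound r p) {n : ℝ} (hn : 0 < n) : SignSound (r / n) p :=
  ⟨fun hr => h.1 ((div_pos_iff_of_pos_right hn).1 hr),
    fun hr => h.2 (by simpa using (div_lt_iff₀ hn).1 hr)⟩

theorem not (h : SignSound r p) : SignSound (-r) (¬ p) :=
  ⟨fun hr => h.2 (neg_pos.1 hr), fun hr => not_not_intro (h.1 (neg_neg_iff_pos.1 hr))⟩

theorem and (hr : SignSound r p) (hs : SignSound s q) : SignSound (min r s) (p ∧ q) :=
  ⟨fun h => ⟨hr.1 (lt_min_iff.1 h).1, hs.1 (lt_min_iff.1 h).2⟩,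
    fun h hpq => (min_lt_iff.1 h).elim (hr.2 · hpq.1) (hs.2 · hpq.2)⟩

variable {ι : Type*} {S : Finset ι} {f : ι → ℝ} {P : ι → Prop}

theorem sup' (hS : S.Nonempty) (hf : ∀ i ∈ S, SignSound (f i) (P i)) :
    SignSound (S.sup' hS f) (∃ i ∈ S, P i) := by
  refine ⟨fun h => ?_, fun h => ?_⟩
  · obtain ⟨i, hi, hmax⟩ := S.exists_mem_eq_sup' hS f
    exact ⟨i, hi, (hf i hi).1 (hmax ▸ h)⟩
  · rintro ⟨i, hi, hPi⟩
    exact (hf i hi).2 ((S.le_sup' f hi).trans_lt h) hPi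

theorem inf' (hS : S.Nonempty) (hf : ∀ i ∈ S, SignSound (f i) (P i)) :
    SignSound (S.inf' hS f) (∀ i ∈ S, P i) := by
  refine ⟨fun h i hi => (hf i hi).1 (h.trans_le (S.inf'_le f hi)), fun h hall => ?_⟩
  obtain ⟨i, hi, hmin⟩ := S.exists_mem_eq_inf' hS f
  exact (hf i hi).2 (hmin ▸ h) (hall i hi)

theorem and_inf' (hr : SignSound r p) (hf : ∀ i ∈ S, SignSound (f i) (P i)) :
    SignSound (if hS : S.Nonempty then min r (S.inf' hS f) else r) (p ∧ ∀ i ∈ S, P i) := by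
  split_ifs with hS
  · exact hr.and (inf' hS hf)
  · exact hr.of_iff (by simp [Finset.not_nonempty_iff_eq_empty.1 hS])

theorem kthLargest_map (hf : ∀ i ∈ S, SignSound (f i) (P i)) {k : ℕ} (hk1 : 1 ≤ k)
    (hk : k ≤ S.card) : SignSound (kthLargest (S.val.map f) k) (k ≤ (S.filter P).card) := by
  have hcard : Multiset.card (S.val.map f) = S.card := Multiset.card_map f S.val
  refine ⟨fun h => ?_, fun h hkP => ?_⟩
  · have hpos := le_countP_of_lt_kthLargest hk1 (hcard ▸ hk) h
    rw [Multiset.countP_map, ← Finset.filter_val, Finset.card_val] at hpos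
    refine hpos.trans (Finset.card_le_card fun i hi => ?_)
    simp only [Finset.mem_filter] at hi ⊢
    exact ⟨hi.1, (hf i hi.1).1 hi.2⟩
  · have hneg := countP_lt_of_kthLargest_lt hk1 (hcard ▸ hk) h
    rw [Multiset.countP_map, ← Finset.filter_val, Finset.card_val] at hneg
    refine (hkP.trans (Finset.card_le_card fun i hi => ?_)).not_gt hneg
    simp only [Finset.mem_filter] at hi ⊢
    exact ⟨hi.1, not_lt.1 fun hfi => (hf i hi.1).2 hfi hi.2⟩

theorem kthLargest_floor (hf : ∀ i ∈ S, SignSound (f i) (P i)) {c : ℝ} (hc0 : 0 ≤ c)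
    (hc : c < S.card) :
    SignSound (kthLargest (S.val.map f) (⌊c⌋ + 1).toNat) (c < (S.filter P).card) := by
  rw [Int.toNat_floor_add_one hc0]
  exact (kthLargest_map hf le_add_self (Nat.floor_lt hc0 |>.2 hc)).of_iff
    (Nat.add_one_le_iff.trans (Nat.floor_lt hc0))

end SignSound

section Indicator

variable {ι : Type*} {S : Finset ι} {P : ι → Prop} {c : ℝ}

theorem lt_ite_one_zero_iff {p : Prop} [Decidable p] (hc0 : 0 ≤ c) (hc1 : c < 1) :
    c < (if p then (1 : ℝ) else 0) ↔ p := by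
  split_ifs with hp <;> simp [hp, hc1, hc0.not_gt]

theorem lt_sup'_ite_iff (hS : S.Nonempty) (hc0 : 0 ≤ c) (hc1 : c < 1) :
    c < S.sup' hS (fun i => if P i then (1 : ℝ) else 0) ↔ ∃ i ∈ S, P i := by
  simp only [Finset.lt_sup'_iff, lt_ite_one_zero_iff hc0 hc1]

theorem lt_inf'_ite_iff (hS : S.Nonempty) (hc0 : 0 ≤ c) (hc1 : c < 1) :
    c < S.inf' hS (fun i => if P i then (1 : ℝ) else 0) ↔ ∀ i ∈ S, P i := by
  simp only [Finset.lt_inf'_iff, lt_ite_one_zero_iff hc0 hc1]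

end Indicator

theorem Frame.card_nbr_pos (F : Frame Dom Loc) (D : Dom) (l : Loc) :
    (0 : ℝ) < (F.nbr D l).card := by
  exact_mod_cast (F.nbr_ne D l).card_pos

theorem signSound_rho (F : Frame Dom Loc) (ω : Var → ℝ → Loc → ℝ) {φ : SaSTL Var Dom}
    (hφ : WellFormed F φ) (t : ℝ) (l : Loc) : SignSound (rho F ω φ t l) (sat F ω φ t l) := by
  induction φ generalizing t l with
  | atom x c => exact .sub _ _
  | not φ ih => exact (ih hφ t l).not
  | and φ ψ ihφ ihψ => exact (ihφ hφ.1 t l).and (ihψ hφ.2 t l)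
  | untl I φ ψ ihφ ihψ =>
    obtain ⟨-, -, hwφ, hwψ⟩ := hφ
    rw [rho]
    split_ifs with hS
    · refine (SignSound.sup' hS fun t' _ =>
        (ihψ hwψ t' l).and_inf' fun t'' _ => ihφ hwφ t'' l).of_iff ?_
      simp [sat, and_assoc]
    · exact .zero
  | agg op D x c =>
    cases op
    · exact .sub _ _
    · exact .sub _ _
    · exact (SignSound.sub _ _).div (F.card_nbr_pos D l)
    · exact .sub _ _
  | cnt op D φ c ih =>
    have hsub : ∀ l' ∈ F.nbr D l, SignSound (rho F ω φ t l') (sat F ω φ t l') :=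
      fun l' _ => ih hφ.1 t l'
    cases op
    · exact (SignSound.sup' (F.nbr_ne D l) hsub).of_iff (lt_sup'_ite_iff _ hφ.2.1 hφ.2.2).symm
    · exact (SignSound.inf' (F.nbr_ne D l) hsub).of_iff (lt_inf'_ite_iff _ hφ.2.1 hφ.2.2).symm
    · exact (SignSound.kthLargest_floor hsub hφ.2.1 (hφ.2.2 l)).of_iff (by simp [sat])
    · have hcard := F.card_nbr_pos D l
      refine (SignSound.kthLargest_floor hsub (mul_nonneg hφ.2.1 hcard.le)
        (mul_lt_of_lt_one_left hcard hφ.2.2)).of_iff ?_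
      simp [sat, lt_div_iff₀ hcard]

theorem sastl_quantitative_soundness_general
    (F : Frame Dom Loc) (ω : Var → ℝ → Loc → ℝ)
    (φ : SaSTL Var Dom) (hφ : WellFormed F φ)
    (t : ℝ) (l : Loc) :
    (0 < rho F ω φ t l → sat F ω φ t l) ∧
    (rho F ω φ t l < 0 → ¬ sat F ω φ t l) :=
  signSound_rho F ω hφ t l

/-- **Soundness of the SaSTL quantitative semantics**: for every SaSTL formula
`φ`, every spatial-temporal signal `ω`, every sample time `t ∈ 𝕋` and every
location `l ∈ L`, if `ρ(φ,ω,t,l) > 0` then `(ω,t,l) ⊨ φ`, and if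
`ρ(φ,ω,t,l) < 0` then `(ω,t,l) ⊭ φ`. -/
theorem sastl_quantitative_soundness
    [Fintype Var] [Fintype Loc] [Nonempty Loc]
    (F : Frame Dom Loc) (ω : Var → ℝ → Loc → ℝ)
    (φ : SaSTL Var Dom) (hφ : WellFormed F φ)
    (t : ℝ) (ht : t ∈ F.T) (l : Loc) :
    (0 < rho F ω φ t l → sat F ω φ t l) ∧
    (rho F ω φ t l < 0 → ¬ sat F ω φ t l) :=
  sastl_quantitative_soundness_general F ω φ hφ t l

end
end

section
/- Lipschitz continuity of SaSTL robustness in the signal: for every SaSTL formula φ, any two spatial-temporal signals ω and ω' over the same time and spatial domains, every sample time t in 𝕋 and every location l in L, one has |ρ(φ,ω,t,l) − ρ(φ,ω',t,l)| ≤ ‖ω − ω'‖_∞. -/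
open scoped Classical

noncomputable section

variable {Var Dom Loc : Type}

/-- Sup-norm distance `‖ω − ω'‖_∞` between two spatial-temporal signals:
the maximum over all `(x, t, l) ∈ X × 𝕋 × L` of `|ω(x,t,l) − ω'(x,t,l)|`. -/
def supDist [Fintype Var] [Nonempty Var] [Fintype Loc] [Nonempty Loc]
    (F : Frame Dom Loc) (ω ω' : Var → ℝ → Loc → ℝ) : ℝ :=
  (Finset.univ : Finset Var).sup' Finset.univ_nonempty fun x =>
    F.T.sup' F.T_ne fun t =>
      (Finset.univ : Finset Loc).sup' Finset.univ_nonempty fun l =>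
        |ω x t l - ω' x t l|

/-! Apart from negation, which is an isometry, every clause of the robustness semantics combines
robustness values by an operation `Φ` (`min`, `max`, average, `k`-th largest element) which is
monotone and commutes with adding a constant, so `f ≤ g + d` pointwise gives `Φ f ≤ Φ g + d`;
hence each `Φ` is 1-Lipschitz for the sup-distance, and induction on the formula propagates the
pointwise bound `|ω - ω'| ≤ ‖ω - ω'‖_∞` of the atoms. For the `k`-th largest element this follows
from `kthLargest m k ≤ a ↔ card m - k < #{x ∈ m | x ≤ a}`. -/

open Finset

section Nonexpansive

variable {ι α : Type*} [AddCommGroup α] [LinearOrder α] [IsOrderedAddMonoid α]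

theorem abs_sub_le_of_forall_le_add {s : Set ι} {d : α} (Φ : (ι → α) → α)
    (hΦ : ∀ f g : ι → α, (∀ i ∈ s, f i ≤ g i + d) → Φ f ≤ Φ g + d)
    {f g : ι → α} (hfg : ∀ i ∈ s, |f i - g i| ≤ d) : |Φ f - Φ g| ≤ d :=
  abs_sub_le_iff.2
    ⟨sub_le_iff_le_add'.2 <| hΦ f g fun i hi =>
        sub_le_iff_le_add'.1 (abs_sub_le_iff.1 (hfg i hi)).1,
      sub_le_iff_le_add'.2 <| hΦ g f fun i hi =>
        sub_le_iff_le_add'.1 (abs_sub_le_iff.1 (hfg i hi)).2⟩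

theorem Finset.sup'_le_sup'_add {s : Finset ι} (hs : s.Nonempty) {f g : ι → α} {d : α}
    (h : ∀ i ∈ s, f i ≤ g i + d) : s.sup' hs f ≤ s.sup' hs g + d :=
  sup'_le hs f fun i hi => (h i hi).trans (add_le_add_left (le_sup' g hi) d)

theorem Finset.inf'_le_inf'_add {s : Finset ι} (hs : s.Nonempty) {f g : ι → α} {d : α}
    (h : ∀ i ∈ s, f i ≤ g i + d) : s.inf' hs f ≤ s.inf' hs g + d :=
  sub_le_iff_le_add.1 <| le_inf' hs g fun i hi =>
    sub_le_iff_le_add.2 ((inf'_le f hi).trans (h i hi))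

end Nonexpansive

theorem Finset.sum_div_card_le_sum_div_card_add {ι α : Type*} [Field α] [LinearOrder α]
    [IsStrictOrderedRing α] {s : Finset ι} (hs : s.Nonempty) {f g : ι → α} {d : α}
    (h : ∀ i ∈ s, f i ≤ g i + d) :
    (∑ i ∈ s, f i) / s.card ≤ (∑ i ∈ s, g i) / s.card + d := by
  have hcard : (0 : α) < s.card := by exact_mod_cast hs.card_pos
  calc (∑ i ∈ s, f i) / s.card ≤ (∑ i ∈ s, (g i + d)) / s.card := by
        gcongr with i hi
        exact h i hi
    _ = (∑ i ∈ s, g i) / s.card + d := by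
      rw [sum_add_distrib, sum_const, nsmul_eq_mul, add_div, mul_div_cancel_left₀ d hcard.ne']

theorem Multiset.countP_mono_left {α : Type*} {p q : α → Prop} [DecidablePred p]
    [DecidablePred q] {s : Multiset α} (h : ∀ x ∈ s, p x → q x) : s.countP p ≤ s.countP q :=
  Quot.inductionOn s (fun _ h => by simpa using List.countP_mono_left (by simpa using h)) h

theorem List.Pairwise.getElem_le_iff_lt_countP {α : Type*} [LinearOrder α] {L : List α}
    (hL : L.Pairwise (· ≤ ·)) {i : ℕ} (hi : i < L.length) {a : α} :
    L[i] ≤ a ↔ i < L.countP (· ≤ a) := by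
  have mono : ∀ j k (hj : j < L.length) (hk : k < L.length), j ≤ k → L[j] ≤ L[k] :=
    fun j k hj hk hjk => hL.rel_get_of_le (a := ⟨j, hj⟩) (b := ⟨k, hk⟩) hjk
  constructor
  · intro hia
    have prefix_le : ∀ x ∈ L.take (i + 1), x ≤ a := by
      intro x hx
      obtain ⟨j, hj, rfl⟩ := List.getElem_of_mem hx
      rw [List.length_take] at hj
      rw [List.getElem_take]
      exact (mono j i _ hi (by omega)).trans hia
    calc i < (L.take (i + 1)).length := by rw [List.length_take]; omega
      _ = (L.take (i + 1)).countP (· ≤ a) :=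
        (List.countP_eq_length.2 (by simpa using prefix_le)).symm
      _ ≤ L.countP (· ≤ a) := (List.take_sublist _ _).countP_le
  · contrapose!
    intro hai
    have suffix_gt : ∀ x ∈ L.drop i, ¬x ≤ a := by
      intro x hx
      obtain ⟨j, hj, rfl⟩ := List.getElem_of_mem hx
      rw [List.getElem_drop, not_le]
      exact hai.trans_le (mono i (i + j) hi _ (by omega))
    calc L.countP (· ≤ a) = (L.take i).countP (· ≤ a) + (L.drop i).countP (· ≤ a) := by
          rw [← List.countP_append, List.take_append_drop]
      _ = (L.take i).countP (· ≤ a) := by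
          rw [(List.countP_eq_zero (l := L.drop i)).2 (by simpa using suffix_gt), add_zero]
      _ ≤ i := List.countP_le_length.trans (List.length_take_le _ _)

-- `kthLargest m k` is entry `card m - k` of the increasing sort, which is in range as soon as
-- `0 < k` (for `k > card m` it is the minimum, not junk).
theorem kthLargest_le_iff {m : Multiset ℝ} (hm : m ≠ 0) {k : ℕ} (hk : 0 < k) (a : ℝ) :
    kthLargest m k ≤ a ↔ Multiset.card m - k < m.countP (· ≤ a) := by
  have hlen : Multiset.card m - k < (m.sort (· ≤ ·)).length := by
    rw [Multiset.length_sort]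
    have := Multiset.card_pos.2 hm
    omega
  rw [kthLargest, List.getD_eq_getElem _ _ hlen,
    (Multiset.pairwise_sort m _).getElem_le_iff_lt_countP hlen, ← Multiset.coe_countP,
    Multiset.sort_eq]

theorem kthLargest_map_le_add {ι : Type*} {s : Multiset ι} (hs : s ≠ 0) {k : ℕ} (hk : 0 < k)
    {f g : ι → ℝ} {d : ℝ} (h : ∀ i ∈ s, f i ≤ g i + d) :
    kthLargest (s.map f) k ≤ kthLargest (s.map g) k + d := by
  have hs' : ∀ u : ι → ℝ, s.map u ≠ 0 := fun u => by simpa using hs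
  set a := kthLargest (s.map g) k
  have hg := (kthLargest_le_iff (hs' g) hk a).1 le_rfl
  rw [kthLargest_le_iff (hs' f) hk]
  rw [Multiset.card_map, Multiset.countP_map, ← Multiset.countP_eq_card_filter] at hg ⊢
  exact hg.trans_le <|
    Multiset.countP_mono_left fun i hi hgi => (h i hi).trans (add_le_add_left hgi d)

theorem toNat_floor_add_one_pos {x : ℝ} (hx : 0 ≤ x) : 0 < (⌊x⌋ + 1).toNat := by
  have := Int.floor_nonneg.2 hx
  omega

section Robustness

variable (F : Frame Dom Loc) (ω ω' : Var → ℝ → Loc → ℝ)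

theorem abs_sub_le_supDist [Fintype Var] [Nonempty Var] [Fintype Loc] [Nonempty Loc]
    (x : Var) {t : ℝ} (ht : t ∈ F.T) (l : Loc) :
    |ω x t l - ω' x t l| ≤ supDist F ω ω' :=
  (le_sup' (fun l => |ω x t l - ω' x t l|) (mem_univ l)).trans <|
    (le_sup' (fun t => univ.sup' univ_nonempty fun l => |ω x t l - ω' x t l|) ht).trans <|
      le_sup' (fun x => F.T.sup' F.T_ne fun t => univ.sup' univ_nonempty fun l =>
        |ω x t l - ω' x t l|) (mem_univ x)

variable {F ω ω'} {d : ℝ}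

theorem abs_rho_untl_sub_le {I : Set ℝ} {φ ψ : SaSTL Var Dom} {t : ℝ} {l : Loc}
    (hI : (F.T.filter (fun s => s - t ∈ I)).Nonempty)
    (hφ : ∀ s ∈ F.T, |rho F ω φ s l - rho F ω' φ s l| ≤ d)
    (hψ : ∀ s ∈ F.T, |rho F ω ψ s l - rho F ω' ψ s l| ≤ d) :
    |rho F ω (.untl I φ ψ) t l - rho F ω' (.untl I φ ψ) t l| ≤ d := by
  simp only [rho, dif_pos hI]
  refine abs_sub_le_of_forall_le_add _ (fun _ _ => sup'_le_sup'_add hI) fun t' ht' => ?_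
  have ht'T : t' ∈ F.T := (mem_filter.1 ht').1
  split_ifs with hbetween
  · refine (abs_min_sub_min_le_max _ _ _ _).trans (max_le (hψ t' ht'T) ?_)
    exact abs_sub_le_of_forall_le_add _ (fun _ _ => inf'_le_inf'_add hbetween)
      fun s hs => hφ s (mem_filter.1 hs).1
  · exact hψ t' ht'T

theorem abs_rho_agg_sub_le {op : AggOp} {D : Dom} {x : Var} {c t : ℝ} {l : Loc}
    (h : ∀ l', |ω x t l' - ω' x t l'| ≤ d) :
    |rho F ω (.agg op D x c) t l - rho F ω' (.agg op D x c) t l| ≤ d := by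
  have hne := F.nbr_ne D l
  cases op <;> simp only [rho, sub_div, sub_sub_sub_cancel_right]
  · exact abs_sub_le_of_forall_le_add _ (fun _ _ => sup'_le_sup'_add hne) fun l' _ => h l'
  · exact abs_sub_le_of_forall_le_add _ (fun _ _ => inf'_le_inf'_add hne) fun l' _ => h l'
  all_goals
    exact abs_sub_le_of_forall_le_add
      (fun f => (∑ l' ∈ F.nbr D l, f l') / ((F.nbr D l).card : ℝ))
      (fun _ _ => sum_div_card_le_sum_div_card_add hne) fun l' _ => h l'

theorem WellFormed.cnt_const_nonneg {op : AggOp} {D : Dom} {φ : SaSTL Var Dom} {c : ℝ}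
    (h : WellFormed F (.cnt op D φ c)) : 0 ≤ c := by
  cases op <;> exact h.2.1

theorem abs_rho_cnt_sub_le {op : AggOp} {D : Dom} {φ : SaSTL Var Dom} {c t : ℝ} {l : Loc}
    (hc : 0 ≤ c) (h : ∀ l' ∈ F.nbr D l, |rho F ω φ t l' - rho F ω' φ t l'| ≤ d) :
    |rho F ω (.cnt op D φ c) t l - rho F ω' (.cnt op D φ c) t l| ≤ d := by
  have hne := F.nbr_ne D l
  have kth : ∀ {k : ℕ}, 0 < k → |kthLargest ((F.nbr D l).val.map (rho F ω φ t ·)) k -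
      kthLargest ((F.nbr D l).val.map (rho F ω' φ t ·)) k| ≤ d := fun hk =>
    abs_sub_le_of_forall_le_add (fun f => kthLargest ((F.nbr D l).val.map f) _)
      (fun _ _ => kthLargest_map_le_add (Multiset.card_pos.1 hne.card_pos) hk) h
  cases op <;> simp only [rho]
  · exact abs_sub_le_of_forall_le_add _ (fun _ _ => sup'_le_sup'_add hne) h
  · exact abs_sub_le_of_forall_le_add _ (fun _ _ => inf'_le_inf'_add hne) h
  · exact kth (toNat_floor_add_one_pos hc)
  · exact kth (toNat_floor_add_one_pos (by positivity))

end Robustness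

/-- **Lipschitz continuity of SaSTL robustness in the signal**: for every
SaSTL formula `φ`, any two spatial-temporal signals `ω`, `ω'` over the same
time and spatial domains, every sample time `t ∈ 𝕋` and every location
`l ∈ L`, one has `|ρ(φ,ω,t,l) − ρ(φ,ω',t,l)| ≤ ‖ω − ω'‖_∞`. -/
theorem sastl_robustness_lipschitz
    [Fintype Var] [Nonempty Var] [Fintype Loc] [Nonempty Loc]
    (F : Frame Dom Loc) (ω ω' : Var → ℝ → Loc → ℝ)
    (φ : SaSTL Var Dom) (hφ : WellFormed F φ)
    (t : ℝ) (ht : t ∈ F.T) (l : Loc) :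
    |rho F ω φ t l - rho F ω' φ t l| ≤ supDist F ω ω' := by
  induction φ generalizing t ht l with
  | atom x c =>
    simpa only [rho, sub_sub_sub_cancel_right] using abs_sub_le_supDist F ω ω' x ht l
  | not φ ih => simpa only [rho, neg_sub_neg, abs_sub_comm] using ih hφ t ht l
  | and φ ψ ihφ ihψ =>
    exact (abs_min_sub_min_le_max _ _ _ _).trans (max_le (ihφ hφ.1 t ht l) (ihψ hφ.2 t ht l))
  | untl I φ ψ ihφ ihψ =>
    obtain ⟨-, hI, hφ, hψ⟩ := hφ
    exact abs_rho_untl_sub_le (hI t ht) (fun s hs => ihφ hφ s hs l) (fun s hs => ihψ hψ s hs l)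
  | agg op D x c => exact abs_rho_agg_sub_le fun l' => abs_sub_le_supDist F ω ω' x ht l'
  | cnt op D φ c ih => exact abs_rho_cnt_sub_le hφ.cnt_const_nonneg fun l' _ => ih hφ.1 t ht l'

end
end

section
/- Until-case soundness (dense time): Let t ∈ ℝ, let A ⊆ ℝ be a nonempty set, and let f, g : ℝ → ℝ. Assume that for every t' ∈ A the set {f(t'') : t'' ∈ (t,t')} is bounded below, and that the set {min(g(t'), inf_{t''∈(t,t')} f(t'')) : t' ∈ A} is bounded above, where the infimum over the empty set is interpreted as any value ≥ 0 (e.g. Mathlib's convention sInf ∅ = 0 may be used, together with the convention that min(g(t'), inf ∅) is replaced by g(t') when (t,t') is empty). If sup_{t'∈A} min(g(t'), inf_{t''∈(t,t')} f(t'')) > 0, then there exists t' ∈ A such that g(t') > 0 and f(t'') > 0 for every t'' ∈ (t,t'). -/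
open scoped Classical

/-- The quantity whose supremum over witness times `t'` is the robustness of the until
formula. -/
noncomputable def untilWitnessValue (f g : ℝ → ℝ) (t t' : ℝ) : ℝ :=
  if (Set.Ioo t t').Nonempty then min (g t') (sInf (f '' Set.Ioo t t')) else g t'

theorem pos_of_pos_untilWitnessValue {f g : ℝ → ℝ} {t t' : ℝ}
    (hbdd : BddBelow (f '' Set.Ioo t t')) (hpos : 0 < untilWitnessValue f g t t') :
    0 < g t' ∧ ∀ t'' ∈ Set.Ioo t t', 0 < f t'' := by
  unfold untilWitnessValue at hpos
  split_ifs at hpos with hne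
  · refine ⟨hpos.trans_le (min_le_left _ _), fun t'' ht'' => ?_⟩
    calc 0 < min (g t') (sInf (f '' Set.Ioo t t')) := hpos
      _ ≤ sInf (f '' Set.Ioo t t') := min_le_right _ _
      _ ≤ f t'' := csInf_le hbdd (Set.mem_image_of_mem f ht'')
  · exact ⟨hpos, fun t'' ht'' => absurd ⟨t'', ht''⟩ hne⟩

theorem until_case_soundness_general (t : ℝ) (A : Set ℝ) (hA : A.Nonempty) (f g : ℝ → ℝ)
    (hbb : ∀ t' ∈ A, BddBelow (f '' Set.Ioo t t'))
    (hpos : 0 < sSup ((fun t' =>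
      if (Set.Ioo t t').Nonempty then min (g t') (sInf (f '' Set.Ioo t t'))
      else g t') '' A)) :
    ∃ t' ∈ A, 0 < g t' ∧ ∀ t'' ∈ Set.Ioo t t', 0 < f t'' := by
  obtain ⟨_, ⟨t', ht', rfl⟩, hwitness⟩ := exists_lt_of_lt_csSup (hA.image _) hpos
  exact ⟨t', ht', pos_of_pos_untilWitnessValue (hbb t' ht') hwitness⟩

/-- **Until-case soundness (dense time)**: let `t ∈ ℝ`, let `A ⊆ ℝ` be
nonempty, and let `f, g : ℝ → ℝ`.  Assume that for every `t' ∈ A` the set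
`{f t'' : t'' ∈ (t, t')}` is bounded below, and that the set of values
`min (g t') (inf_{t'' ∈ (t,t')} f t'')` for `t' ∈ A` is bounded above, where
`min (g t') (inf ∅)` is replaced by `g t'` when the interval `(t, t')` is
empty.  If the supremum over `t' ∈ A` of these values is strictly positive,
then there exists `t' ∈ A` with `g t' > 0` and `f t'' > 0` for every
`t'' ∈ (t, t')`. -/
theorem until_case_soundness (t : ℝ) (A : Set ℝ) (hA : A.Nonempty) (f g : ℝ → ℝ)
    (hbb : ∀ t' ∈ A, BddBelow (f '' Set.Ioo t t'))
    (hba : BddAbove ((fun t' =>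
      if (Set.Ioo t t').Nonempty then min (g t') (sInf (f '' Set.Ioo t t'))
      else g t') '' A))
    (hpos : 0 < sSup ((fun t' =>
      if (Set.Ioo t t').Nonempty then min (g t') (sInf (f '' Set.Ioo t t'))
      else g t') '' A)) :
    ∃ t' ∈ A, 0 < g t' ∧ ∀ t'' ∈ Set.Ioo t t', 0 < f t'' :=
  until_case_soundness_general t A hA f g hbb hpos
end
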